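/- Let A be an n×n matrix with nonnegative real entries. There exists a vector y with all positive coordinates such that y_i^{-1} a_{ij} y_j < 1 for all i, j with a_{ij} > 0, if and only if every cycle in the weighted digraph of A has weight strictly less than 1. -/

import Mathlib

open scoped NNReal

/-- Max-times matrix product. -/
noncomputable def maxMul {n : ℕ} (A B : Matrix (Fin n) (Fin n) ℝ≥0) : Matrix (Fin n) (Fin n) ℝ≥0 :=
  fun i j => Finset.univ.sup fun k => A i k * B k j

/-- Max-times matrix power. -/
noncomputable def maxPow {n : ℕ} (A : Matrix (Fin n) (Fin n) ℝ≥0) : ℕ → Matrix (Fin n) (Fin n) ℝ≥0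
  | 0 => fun i j => if i = j then 1 else 0
  | (k+1) => maxMul (maxPow A k) A

/-- Max-times matrix-vector product. -/
noncomputable def maxVec {n : ℕ} (A : Matrix (Fin n) (Fin n) ℝ≥0) (x : Fin n → ℝ≥0) : Fin n → ℝ≥0 :=
  fun i => Finset.univ.sup fun j => A i j * x j

/-- Weight of the cycle visiting `c 0, c 1, ..., c m, c 0` (indices cyclic in `Fin (m+1)`). -/
noncomputable def cycleWeight {n m : ℕ} (A : Matrix (Fin n) (Fin n) ℝ≥0) (c : Fin (m+1) → Fin n) : ℝ≥0 :=
  ∏ i : Fin (m+1), A (c i) (c (i + 1))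

/-- Kleene star `I ⊕ A ⊕ ... ⊕ A^{n-1}`. -/
noncomputable def kleeneStar {n : ℕ} (A : Matrix (Fin n) (Fin n) ℝ≥0) : Matrix (Fin n) (Fin n) ℝ≥0 :=
  fun i j => (Finset.range n).sup fun k => maxPow A k i j

namespace FPaux

noncomputable def wt {n : ℕ} (M : Matrix (Fin n) (Fin n) ℝ≥0) : List (Fin n) → ℝ≥0
  | [] => 1
  | [_] => 1
  | a :: b :: l => M a b * wt M (b :: l)

lemma wt_nil {n} (M : Matrix (Fin n) (Fin n) ℝ≥0) : wt M [] = 1 := rfl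
lemma wt_single {n} (M : Matrix (Fin n) (Fin n) ℝ≥0) (a : Fin n) : wt M [a] = 1 := rfl
lemma wt_cons_cons {n} (M : Matrix (Fin n) (Fin n) ℝ≥0) (a b : Fin n) (l : List (Fin n)) :
    wt M (a :: b :: l) = M a b * wt M (b :: l) := rfl

lemma wt_append_cons {n} (M : Matrix (Fin n) (Fin n) ℝ≥0) :
    ∀ (xs : List (Fin n)) (v : Fin n) (ys : List (Fin n)),
    wt M (xs ++ v :: ys) = wt M (xs ++ [v]) * wt M (v :: ys)
  | [], v, ys => by simp [wt_nil, wt_single]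
  | [a], v, ys => by simp [wt_single, wt_cons_cons]
  | a :: b :: t, v, ys => by
      have ih := wt_append_cons M (b :: t) v ys
      simp only [List.cons_append] at *
      rw [wt_cons_cons, wt_cons_cons, ih, mul_assoc]

lemma wt_eq_prod {n} (M : Matrix (Fin n) (Fin n) ℝ≥0) :
    ∀ (L : List (Fin n)), wt M L = (List.zipWith (fun a b => M a b) L L.tail).prod
  | [] => by simp [wt_nil]
  | [a] => by simp [wt_single]
  | a :: b :: l => by
      rw [wt_cons_cons, wt_eq_prod M (b :: l)]
      simp

noncomputable def fvec {n : ℕ} (M : Matrix (Fin n) (Fin n) ℝ≥0) : ℕ → Fin n → ℝ≥0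
  | 0 => fun _ => 1
  | (k+1) => fun i => max (fvec M k i) (Finset.univ.sup fun j => M i j * fvec M k j)

lemma fvec_le_succ {n} (M : Matrix (Fin n) (Fin n) ℝ≥0) (k : ℕ) (i : Fin n) :
    fvec M k i ≤ fvec M (k+1) i := le_max_left _ _

lemma fvec_mono {n} (M : Matrix (Fin n) (Fin n) ℝ≥0) {k k' : ℕ} (h : k ≤ k') (i : Fin n) :
    fvec M k i ≤ fvec M k' i := by
  induction h with
  | refl => exact le_rfl
  | step h ih => exact le_trans ih (fvec_le_succ M _ i)

lemma one_le_fvec {n} (M : Matrix (Fin n) (Fin n) ℝ≥0) (k : ℕ) (i : Fin n) :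
    1 ≤ fvec M k i := fvec_mono M (Nat.zero_le k) i

lemma wt_le_fvec {n} (M : Matrix (Fin n) (Fin n) ℝ≥0) :
    ∀ (l : List (Fin n)) (i : Fin n), wt M (i :: l) ≤ fvec M l.length i
  | [], i => le_refl _
  | j :: l, i => by
      rw [wt_cons_cons]
      calc M i j * wt M (j :: l) ≤ M i j * fvec M l.length j := by
            exact mul_le_mul_right (wt_le_fvec M l j) _
        _ ≤ Finset.univ.sup (fun j' => M i j' * fvec M l.length j') :=
            Finset.le_sup (f := fun j' => M i j' * fvec M l.length j') (Finset.mem_univ j)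
        _ ≤ fvec M (l.length + 1) i := le_max_right _ _

lemma exists_list_eq_fvec {n} (M : Matrix (Fin n) (Fin n) ℝ≥0) :
    ∀ (k : ℕ) (i : Fin n), ∃ l : List (Fin n), l.length ≤ k ∧ fvec M k i = wt M (i :: l)
  | 0, i => ⟨[], le_refl _, rfl⟩
  | k+1, i => by
      rcases le_total (Finset.univ.sup fun j => M i j * fvec M k j) (fvec M k i) with h | h
      · obtain ⟨l, hl, he⟩ := exists_list_eq_fvec M k i
        exact ⟨l, le_trans hl (Nat.le_succ k), by simp only [fvec]; rw [max_eq_left h, he]⟩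
      · obtain ⟨j, -, hj⟩ := Finset.exists_mem_eq_sup Finset.univ ⟨i, Finset.mem_univ i⟩
          (fun j => M i j * fvec M k j)
        obtain ⟨l, hl, he⟩ := exists_list_eq_fvec M k j
        refine ⟨j :: l, by simpa using hl, ?_⟩
        simp only [fvec]; rw [max_eq_right h, hj, wt_cons_cons, he]

lemma exists_decomp {α : Type*} [DecidableEq α] (l : List α) (h : ¬ l.Nodup) :
    ∃ (P Q R : List α) (v : α), l = P ++ v :: (Q ++ v :: R) := by
  rw [List.nodup_iff_count_le_one] at h
  push_neg at h
  obtain ⟨v, hv⟩ := h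
  have hm : v ∈ l := List.count_pos_iff.mp (by omega)
  obtain ⟨P, T, rfl⟩ := List.append_of_mem hm
  rw [List.count_append, List.count_cons_self] at hv
  by_cases hT : v ∈ T
  · obtain ⟨Q, R, rfl⟩ := List.append_of_mem hT
    exact ⟨P, Q, R, v, rfl⟩
  · have hTc : List.count v T = 0 := List.count_eq_zero.mpr hT
    have hP : v ∈ P := List.count_pos_iff.mp (by omega)
    obtain ⟨P1, P2, rfl⟩ := List.append_of_mem hP
    exact ⟨P1, P2, T, v, by simp⟩

lemma getElem_congr' {α : Type*} (l : List α) {i j : ℕ} (h : i = j) {hi : i < l.length} :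
    l[i]'hi = l[j]'(h ▸ hi) := by subst h; rfl

lemma wt_closed {n : ℕ} (M : Matrix (Fin n) (Fin n) ℝ≥0) (v : Fin n) (Q : List (Fin n)) :
    wt M (v :: (Q ++ [v])) =
      cycleWeight M (fun i : Fin (Q.length + 1) => (v :: Q).get (Fin.cast (by simp) i)) := by
  rw [wt_eq_prod, cycleWeight, ← List.prod_ofFn]
  congr 1
  apply List.ext_getElem
  · simp [Nat.min_def]
  intro k h1 h2
  have hm : k < Q.length + 1 := by simpa using h2
  rw [List.getElem_zipWith, List.getElem_ofFn]
  simp only [List.tail_cons, List.get_eq_getElem, Fin.coe_cast]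
  congr 1
  · show ((v :: Q) ++ [v])[k]'(by simp; omega) = (v :: Q)[k]'(by simp; omega)
    rw [List.getElem_append_left (by simpa using hm)]
  · have hsucc : (((⟨k, hm⟩ : Fin (Q.length+1)) + 1 : Fin (Q.length+1)) : ℕ)
        = (k+1) % (Q.length+1) := by
      rw [Fin.add_def, Fin.val_one']
      simp [Nat.add_mod_mod]
    have main : ∀ (jj : ℕ) (hj : jj < (v :: Q).length), jj = (k+1) % (Q.length+1) →
        (Q ++ [v])[k]'(by simp; omega) = (v :: Q)[jj]'hj := by
      intro jj hj hjj
      rcases Nat.lt_or_ge k Q.length with hlt | hge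
      · have hmod : jj = k + 1 := by rw [hjj]; exact Nat.mod_eq_of_lt (by omega)
        rw [List.getElem_append_left hlt, getElem_congr' _ hmod, List.getElem_cons_succ]
      · have hk : k = Q.length := by omega
        subst hk
        have hmod : jj = 0 := by rw [hjj]; simp
        rw [List.getElem_append_right (le_refl _), getElem_congr' _ hmod]
        simp
    exact main _ (by rw [hsucc]; exact Nat.mod_lt _ (by omega)) hsucc

lemma splice {n : ℕ} (B : Matrix (Fin n) (Fin n) ℝ≥0)
    (hclosed : ∀ (v : Fin n) (Q : List (Fin n)), Q.length < n → wt B (v :: (Q ++ [v])) ≤ 1)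
    (i : Fin n) (l : List (Fin n)) (hlen : l.length = n) :
    ∃ l' : List (Fin n), l'.length < n ∧ wt B (i :: l) ≤ wt B (i :: l') := by
  have hnodup : ¬ (i :: l).Nodup := by
    intro h
    have := h.length_le_card
    simp [hlen, Fintype.card_fin] at this
  obtain ⟨P, Q, R, v, hdec⟩ := exists_decomp _ hnodup
  have hlens := congrArg List.length hdec
  simp at hlens
  have hQ : Q.length < n := by omega
  have h1 : wt B (i :: l) = wt B (P ++ [v]) * (wt B (v :: (Q ++ [v])) * wt B (v :: R)) := by
    rw [hdec, wt_append_cons]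
    congr 1
    rw [show v :: (Q ++ v :: R) = (v :: Q) ++ v :: R from rfl, wt_append_cons]
    rfl
  have h2 : wt B (i :: l) ≤ wt B (P ++ v :: R) := by
    have step : wt B (P ++ [v]) * (wt B (v :: (Q ++ [v])) * wt B (v :: R))
        ≤ wt B (P ++ [v]) * (1 * wt B (v :: R)) :=
      mul_le_mul_right (mul_le_mul_left (hclosed v Q hQ) _) _
    rw [one_mul] at step
    rw [h1]
    exact le_trans step (le_of_eq (wt_append_cons B P v R).symm)
  cases P with
  | nil =>
      have hi : i = v := by
        have := hdec
        simp at this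
        exact this.1
      refine ⟨R, by omega, ?_⟩
      simpa [hi] using h2
  | cons a P' =>
      have hvals : a = i ∧ l = P' ++ v :: (Q ++ v :: R) := by
        have := hdec
        simp at this
        exact ⟨this.1.symm, this.2⟩
      refine ⟨P' ++ v :: R, ?_, ?_⟩
      · have := congrArg List.length hvals.2
        simp at this ⊢
        omega
      · calc wt B (i :: l) ≤ wt B ((a :: P') ++ v :: R) := h2
          _ = wt B (i :: (P' ++ v :: R)) := by rw [hvals.1]; rfl

end FPaux

/-- Strong Fiedler–Pták scaling exists iff every cycle of the digraph of `A` has weight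
strictly less than 1. -/
theorem strong_fp_scaling_iff_cycles_lt_one {n : ℕ} (A : Matrix (Fin n) (Fin n) ℝ≥0) :
    (∃ y : Fin n → ℝ≥0, (∀ i, 0 < y i) ∧
        ∀ i j, 0 < A i j → (y i)⁻¹ * A i j * y j < 1) ↔
      (∀ (m : ℕ) (c : Fin (m+1) → Fin n),
        (∀ i, 0 < A (c i) (c (i + 1))) → cycleWeight A c < 1) := by
  constructor
  · rintro ⟨y, hy, hs⟩ m c hc
    have hyne : ∀ i, y i ≠ 0 := fun i => (hy i).ne'
    have heq : ∏ i : Fin (m+1), ((y (c i))⁻¹ * A (c i) (c (i+1)) * y (c (i+1)))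
        = cycleWeight A c := by
      rw [Finset.prod_mul_distrib, Finset.prod_mul_distrib]
      have h3 : ∏ i : Fin (m+1), y (c (i+1)) = ∏ i : Fin (m+1), y (c i) :=
        Fintype.prod_equiv (Equiv.addRight (1 : Fin (m+1))) _ _ (fun i => rfl)
      rw [h3, Finset.prod_inv_distrib, cycleWeight]
      have hP : (∏ i : Fin (m+1), y (c i)) ≠ 0 :=
        Finset.prod_ne_zero_iff.mpr (fun i _ => hyne _)
      rw [mul_right_comm, inv_mul_cancel₀ hP, one_mul]
    rw [← heq]
    calc ∏ i : Fin (m+1), ((y (c i))⁻¹ * A (c i) (c (i+1)) * y (c (i+1)))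
        < ∏ _i : Fin (m+1), (1:ℝ≥0) := by
          apply Finset.prod_lt_prod_of_nonempty
          · intro i _
            exact pos_iff_ne_zero.mpr
              (mul_ne_zero (mul_ne_zero (inv_ne_zero (hyne _)) (hc i).ne') (hyne _))
          · intro i _
            exact hs _ _ (hc i)
          · exact Finset.univ_nonempty
      _ = 1 := Finset.prod_const_one
  · intro h
    rcases Nat.eq_zero_or_pos n with hn | hn
    · subst hn
      exact ⟨fun _ => 1, fun i => i.elim0, fun i => i.elim0⟩
    classical
    set W : ℝ≥0 := Finset.univ.sup
      (fun p : (Σ m : Fin n, (Fin (m.1+1) → Fin n)) => cycleWeight A p.2) with hWdef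
    have hW1 : W < 1 := by
      rw [hWdef, Finset.sup_lt_iff (by norm_num : (⊥:ℝ≥0) < 1)]
      intro p _
      by_cases hp : ∀ i, 0 < A (p.2 i) (p.2 (i+1))
      · exact h p.1.1 p.2 hp
      · push_neg at hp
        obtain ⟨i, hi⟩ := hp
        have h0 : A (p.2 i) (p.2 (i+1)) = 0 := le_antisymm hi zero_le
        have : cycleWeight A p.2 = 0 :=
          Finset.prod_eq_zero (Finset.mem_univ i) h0
        rw [this]; norm_num
    set μ : ℝ≥0 := max W (1/2) with hμdef
    have hμ0 : 0 < μ := lt_of_lt_of_le (by rw [← NNReal.coe_lt_coe]; norm_num) (le_max_right _ _)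
    have hμ1 : μ < 1 := max_lt hW1 (by rw [← NNReal.coe_lt_coe]; norm_num)
    set lam : ℝ≥0 := μ ^ ((n:ℝ)⁻¹) with hlamdef
    have hlam0 : 0 < lam := NNReal.rpow_pos hμ0
    have hlam1 : lam < 1 := NNReal.rpow_lt_one hμ1 (by positivity)
    have hlamn : lam ^ n = μ := by
      rw [hlamdef, ← NNReal.rpow_natCast (μ ^ ((n:ℝ)⁻¹)) n, ← NNReal.rpow_mul,
        inv_mul_cancel₀ (by exact_mod_cast hn.ne' : (n:ℝ) ≠ 0), NNReal.rpow_one]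
    set B : Matrix (Fin n) (Fin n) ℝ≥0 := fun i j => A i j * lam⁻¹ with hBdef
    have hclosed : ∀ (v : Fin n) (Q : List (Fin n)), Q.length < n →
        FPaux.wt B (v :: (Q ++ [v])) ≤ 1 := by
      intro v Q hQ
      rw [FPaux.wt_closed]
      set c : Fin (Q.length + 1) → Fin n :=
        fun i => (v :: Q).get (Fin.cast (by simp) i) with hcdef
      have hcw : cycleWeight B c = cycleWeight A c * (lam⁻¹) ^ (Q.length + 1) := by
        rw [cycleWeight, cycleWeight]
        simp only [hBdef]
        rw [Finset.prod_mul_distrib, Finset.prod_const, Finset.card_univ, Fintype.card_fin]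
      have hAle : cycleWeight A c ≤ lam ^ (Q.length + 1) := by
        calc cycleWeight A c ≤ W := by
              exact Finset.le_sup
                (f := fun p : (Σ m : Fin n, (Fin (m.1+1) → Fin n)) => cycleWeight A p.2)
                (Finset.mem_univ (⟨⟨Q.length, hQ⟩, c⟩ : Σ m : Fin n, (Fin (m.1+1) → Fin n)))
          _ ≤ μ := le_max_left _ _
          _ = lam ^ n := hlamn.symm
          _ ≤ lam ^ (Q.length+1) := pow_le_pow_of_le_one zero_le hlam1.le hQ
      rw [hcw]
      calc cycleWeight A c * lam⁻¹ ^ (Q.length+1)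
          ≤ lam ^ (Q.length+1) * lam⁻¹ ^ (Q.length+1) := mul_le_mul_left hAle _
        _ = 1 := by rw [← mul_pow, mul_inv_cancel₀ hlam0.ne', one_pow]
    set y : Fin n → ℝ≥0 := FPaux.fvec B (n-1) with hydef
    have hypos : ∀ i, 0 < y i := fun i =>
      lt_of_lt_of_le one_pos (FPaux.one_le_fvec B _ i)
    have hstep : ∀ i, FPaux.fvec B n i ≤ y i := by
      intro i
      obtain ⟨l, hl, he⟩ := FPaux.exists_list_eq_fvec B n i
      rw [he]
      rcases Nat.lt_or_ge l.length n with hlt | hge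
      · exact le_trans (FPaux.wt_le_fvec B l i) (FPaux.fvec_mono B (by omega) i)
      · have hleq : l.length = n := le_antisymm hl hge
        obtain ⟨l', hl', hle⟩ := FPaux.splice B hclosed i l hleq
        exact le_trans hle (le_trans (FPaux.wt_le_fvec B l' i) (FPaux.fvec_mono B (by omega) i))
    refine ⟨y, hypos, ?_⟩
    intro i j _
    have key : A i j * y j < y i := by
      have h1 : B i j * y j ≤ FPaux.fvec B ((n-1)+1) i := by
        calc B i j * y j ≤ Finset.univ.sup (fun j' => B i j' * FPaux.fvec B (n-1) j') :=
            Finset.le_sup (f := fun j' => B i j' * FPaux.fvec B (n-1) j') (Finset.mem_univ j)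
          _ ≤ _ := le_max_right _ _
      have hsub : n - 1 + 1 = n := by omega
      rw [hsub] at h1
      have h2 : B i j * y j ≤ y i := le_trans h1 (hstep i)
      have h3 : A i j * y j = lam * (B i j * y j) := by
        simp only [hBdef]
        rw [show lam * (A i j * lam⁻¹ * y j) = A i j * y j * (lam * lam⁻¹) by ring,
          mul_inv_cancel₀ hlam0.ne', mul_one]
      rw [h3]
      calc lam * (B i j * y j) ≤ lam * y i := mul_le_mul_right h2 _
        _ < 1 * y i := mul_lt_mul_of_pos_right hlam1 (hypos i)
        _ = y i := one_mul _
    rw [mul_assoc]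
    calc (y i)⁻¹ * (A i j * y j) < (y i)⁻¹ * y i :=
        mul_lt_mul_of_pos_left key (pos_iff_ne_zero.mpr (inv_ne_zero (hypos i).ne'))
      _ = 1 := inv_mul_cancel₀ (hypos i).ne'
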